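/- arXiv:2204.05952 — 4 statements merged into one kernel-verified Lean document; each statement's English description precedes it below -/
import Mathlib

section
/- Let A ∈ ℝ^{m×m} (m = r + n(p−1)) be the VECM state matrix built from α, β ∈ ℝ^{n×r} and Φ_1, …, Φ_{p−1} ∈ ℝ^{n×n}. Let λ ∈ ℂ with λ ≠ 1 and let q = (q_β', q_1', …, q_{p−1}')' ∈ ℂ^m satisfy Aq = λq. Then q_i = λ q_{i+1} for i = 1, …, p−2, and q_β = (λ/(λ−1)) β' q_1. -/
open Matrix

/-- The VECM state matrix A ∈ R^{m×m}, m = r + n(p-1) (here s = p-1), with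
first block row (β'α + I_r, β'Φ₁, …, β'Φ_{p-1}), second block row
(α, Φ₁, …, Φ_{p-1}), blocks (j+2, j+1) equal to I_n, and all other blocks 0.
States are indexed by `Fin r ⊕ Fin s × Fin n`. -/
def vecmStateMatrix {R : Type*} [Ring R] {n r s : ℕ}
    (α β : Matrix (Fin n) (Fin r) R) (Φ : Fin s → Matrix (Fin n) (Fin n) R) :
    Matrix (Fin r ⊕ Fin s × Fin n) (Fin r ⊕ Fin s × Fin n) R :=
  Matrix.of fun i j =>
    match i, j with
    | Sum.inl a, Sum.inl b => (βᵀ * α + 1 : Matrix (Fin r) (Fin r) R) a b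
    | Sum.inl a, Sum.inr (k, b) => (βᵀ * Φ k : Matrix (Fin r) (Fin n) R) a b
    | Sum.inr (i, a), Sum.inl b => if i.val = 0 then α a b else 0
    | Sum.inr (i, a), Sum.inr (k, b) =>
        if i.val = 0 then Φ k a b
        else if i.val = k.val + 1 then (if a = b then (1 : R) else 0) else 0

/-- If Aq = λq with λ ≠ 1, where q = (q_β', q₁', …, q_{p-1}')', then
q_i = λ q_{i+1} for i = 1, …, p-2, and q_β = (λ/(λ-1)) β' q₁. -/
theorem stmt4 (n r s : ℕ) (hs : 0 < s)
    (α β : Matrix (Fin n) (Fin r) ℝ) (Φ : Fin s → Matrix (Fin n) (Fin n) ℝ)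
    (l : ℂ) (hl : l ≠ 1)
    (q : Fin r ⊕ Fin s × Fin n → ℂ)
    (hq : (vecmStateMatrix (α.map Complex.ofReal) (β.map Complex.ofReal)
        (fun k => (Φ k).map Complex.ofReal)).mulVec q = l • q) :
    (∀ (k : Fin s) (h : k.val + 1 < s) (a : Fin n),
        q (Sum.inr (k, a)) = l * q (Sum.inr (⟨k.val + 1, h⟩, a))) ∧
    (∀ a : Fin r,
        q (Sum.inl a) = l / (l - 1) *
          (βᵀ.map Complex.ofReal).mulVec (fun b => q (Sum.inr (⟨0, hs⟩, b))) a) := by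
  constructor
  · intro k h a
    have key := congrFun hq (Sum.inr (⟨k.val + 1, h⟩, a))
    simp only [vecmStateMatrix, mulVec, dotProduct, Fintype.sum_sum_type, Fintype.sum_prod_type,
      Matrix.of_apply, Pi.smul_apply, smul_eq_mul] at key
    rw [← key]
    simp only [Nat.succ_ne_zero, if_false, Nat.add_right_cancel_iff, zero_mul,
      Finset.sum_const_zero, zero_add]
    rw [Finset.sum_eq_single k]
    · simp [ite_mul]
    · intro x _ hx
      have : ¬ ((k : Fin s).val = x.val) := fun hc => hx (Fin.ext hc.symm)
      simp [this]
    · simp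
  · intro a
    have e0 : ∀ c : Fin n, (∑ b, (α c b : ℂ) * q (Sum.inl b))
        + ∑ k, ∑ b, (Φ k c b : ℂ) * q (Sum.inr (k, b)) = l * q (Sum.inr (⟨0, hs⟩, c)) := by
      intro c
      have := congrFun hq (Sum.inr (⟨0, hs⟩, c))
      simp only [vecmStateMatrix, mulVec, dotProduct, Fintype.sum_sum_type, Fintype.sum_prod_type,
        Matrix.of_apply, Pi.smul_apply, smul_eq_mul, Matrix.map_apply] at this
      simpa using this
    have e1 := congrFun hq (Sum.inl a)
    simp only [vecmStateMatrix, mulVec, dotProduct, Fintype.sum_sum_type, Fintype.sum_prod_type,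
      Matrix.of_apply, Pi.smul_apply, smul_eq_mul, Matrix.map_apply, Matrix.add_apply,
      Matrix.mul_apply, Matrix.one_apply, Matrix.transpose_apply] at e1
    set S : ℂ := ∑ c, (β c a : ℂ) * q (Sum.inr (⟨0, hs⟩, c)) with hS
    have h1 : (∑ c, (β c a : ℂ) * ∑ b, (α c b : ℂ) * q (Sum.inl b))
        = ∑ b, (∑ c, (β c a : ℂ) * (α c b : ℂ)) * q (Sum.inl b) := by
      simp only [Finset.mul_sum, Finset.sum_mul, mul_assoc]
      exact Finset.sum_comm
    have h2 : (∑ c, (β c a : ℂ) * ∑ k, ∑ b, (Φ k c b : ℂ) * q (Sum.inr (k, b)))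
        = ∑ k, ∑ b, (∑ c, (β c a : ℂ) * (Φ k c b : ℂ)) * q (Sum.inr (k, b)) := by
      simp only [Finset.mul_sum, Finset.sum_mul, mul_assoc]
      rw [Finset.sum_comm]
      exact Finset.sum_congr rfl fun k _ => Finset.sum_comm
    have key : l * S = (∑ c, (β c a : ℂ) * ∑ b, (α c b : ℂ) * q (Sum.inl b))
        + ∑ c, (β c a : ℂ) * ∑ k, ∑ b, (Φ k c b : ℂ) * q (Sum.inr (k, b)) := by
      rw [← Finset.sum_add_distrib]
      rw [hS, Finset.mul_sum]
      refine Finset.sum_congr rfl fun c _ => ?_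
      rw [← mul_add, e0 c]
      ring
    have h3 : (∑ x, ((∑ c, (β c a : ℂ) * (α c x : ℂ)) + if a = x then 1 else 0) * q (Sum.inl x))
        = (∑ x, (∑ c, (β c a : ℂ) * (α c x : ℂ)) * q (Sum.inl x)) + q (Sum.inl a) := by
      simp [add_mul, Finset.sum_add_distrib, ite_mul]
    have main : l * S + q (Sum.inl a) = l * q (Sum.inl a) := by
      rw [key, h1, h2, add_right_comm]
      convert e1 using 3
      exact h3.symm
    have hgoal : ((βᵀ.map Complex.ofReal).mulVec (fun b => q (Sum.inr (⟨0, hs⟩, b)))) a = S := by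
      simp [mulVec, dotProduct, hS]
    rw [hgoal]
    have hl' : l - 1 ≠ 0 := sub_ne_zero.mpr hl
    field_simp
    linear_combination -main
end

section
/- Let α, β ∈ ℝ^{n×r}, Φ_1, …, Φ_{p−1} ∈ ℝ^{n×n}, let 𝒜 ∈ ℝ^{np×np} be the companion matrix of the VAR coefficients 𝒜_1 = I_n + αβ' + Φ_1, 𝒜_j = Φ_j − Φ_{j−1} (1 < j < p), 𝒜_p = −Φ_{p−1}, and let A ∈ ℝ^{m×m} (m = r + n(p−1)) be the VECM state matrix built from (α, β, Φ_1, …, Φ_{p−1}). Let λ ∈ ℂ with λ ∉ {0, 1} and let v = (v_1', …, v_p')' ∈ ℂ^{np} be a nonzero vector with 𝒜v = λv. Then: (i) v_i = λ v_{i+1} for i = 1, …, p−1, and v_1 ≠ 0; (ii) the vector q = (q_β', q_1', …, q_{p−1}')' ∈ ℂ^m defined by q_β = β' v_1 and q_i = ((λ−1)/λ^i) v_1 for i = 1, …, p−1 satisfies Aq = λq and q ≠ 0; in particular q_1 = ((λ−1)/λ) v_1 and q_β = (λ/(λ−1)) β' q_1 = β' v_1. -/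
open Matrix

/-- The companion matrix 𝒜 ∈ R^{np×np} of 𝒜₁, …, 𝒜_p (0-indexed blocks):
first block row is (𝒜₁, …, 𝒜_p), block (j+1, j) is I_n, all other blocks 0. -/
def companionMatrix {R : Type*} [Semiring R] {n p : ℕ}
    (A : Fin p → Matrix (Fin n) (Fin n) R) :
    Matrix (Fin p × Fin n) (Fin p × Fin n) R :=
  Matrix.of fun i j =>
    if i.1.val = 0 then A j.1 i.2 j.2
    else if i.1.val = j.1.val + 1 then (if i.2 = j.2 then (1 : R) else 0) else 0

/-- The VAR(p) coefficients (p = s+1) corresponding to VECM parameters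
(α, β, Φ₁, …, Φ_{p-1}): 𝒜₁ = I + αβ' + Φ₁, 𝒜ⱼ = Φⱼ - Φ_{j-1} for 1 < j < p,
𝒜_p = -Φ_{p-1}. -/
def varCoefs {R : Type*} [Ring R] {n r s : ℕ}
    (α β : Matrix (Fin n) (Fin r) R) (Φ : Fin s → Matrix (Fin n) (Fin n) R) :
    Fin (s + 1) → Matrix (Fin n) (Fin n) R := fun k =>
  let Φ' : ℕ → Matrix (Fin n) (Fin n) R := fun i => if h : i < s then Φ ⟨i, h⟩ else 0
  if k.val = 0 then 1 + α * βᵀ + Φ' 0 else Φ' k.val - Φ' (k.val - 1)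

/-- Let 𝒜 be the companion matrix of the VAR coefficients derived from the
VECM parameters (α, β, Φ₁, …, Φ_{p-1}) and A the VECM state matrix.  If
𝒜v = λv with λ ∉ {0,1} and v ≠ 0, then (i) v_i = λ v_{i+1} and v₁ ≠ 0, and
(ii) q with q_β = β'v₁, q_i = ((λ-1)/λ^i) v₁ is an eigenvector of A for λ;
in particular q₁ = ((λ-1)/λ) v₁ and q_β = (λ/(λ-1)) β'q₁ = β'v₁. -/
theorem stmt5 (n r s : ℕ) (hs : 0 < s)
    (α β : Matrix (Fin n) (Fin r) ℝ) (Φ : Fin s → Matrix (Fin n) (Fin n) ℝ)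
    (l : ℂ) (hl0 : l ≠ 0) (hl1 : l ≠ 1)
    (v : Fin (s + 1) × Fin n → ℂ) (hv0 : v ≠ 0)
    (hv : (companionMatrix (varCoefs (α.map Complex.ofReal) (β.map Complex.ofReal)
        (fun k => (Φ k).map Complex.ofReal))).mulVec v = l • v) :
    (∀ (k : Fin (s + 1)) (h : k.val + 1 < s + 1) (a : Fin n),
        v (k, a) = l * v (⟨k.val + 1, h⟩, a)) ∧
    (fun a => v (⟨0, Nat.succ_pos s⟩, a)) ≠ 0 ∧
    (let v1 : Fin n → ℂ := fun a => v (⟨0, Nat.succ_pos s⟩, a)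
     let q : Fin r ⊕ Fin s × Fin n → ℂ := fun i =>
       match i with
       | Sum.inl a => (βᵀ.map Complex.ofReal).mulVec v1 a
       | Sum.inr (k, a) => (l - 1) / l ^ (k.val + 1) * v1 a
     (vecmStateMatrix (α.map Complex.ofReal) (β.map Complex.ofReal)
        (fun k => (Φ k).map Complex.ofReal)).mulVec q = l • q ∧
     q ≠ 0 ∧
     (∀ a, q (Sum.inr (⟨0, hs⟩, a)) = (l - 1) / l * v1 a) ∧
     (∀ a, q (Sum.inl a) = l / (l - 1) *
        (βᵀ.map Complex.ofReal).mulVec (fun b => q (Sum.inr (⟨0, hs⟩, b))) a) ∧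
     (∀ a, q (Sum.inl a) = (βᵀ.map Complex.ofReal).mulVec v1 a)) := by
  classical
  -- part (i)
  have hrec : ∀ (k : Fin (s + 1)) (h : k.val + 1 < s + 1) (a : Fin n),
      v (k, a) = l * v (⟨k.val + 1, h⟩, a) := by
    intro k h a
    have H := congrFun hv (⟨k.val + 1, h⟩, a)
    simp only [mulVec, dotProduct, companionMatrix, of_apply, Fintype.sum_prod_type,
      Pi.smul_apply, smul_eq_mul] at H
    rw [← H]
    rw [Finset.sum_eq_single k]
    · rw [Finset.sum_eq_single a]
      · simp
      · intro b _ hb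
        simp [Ne.symm hb]
      · simp
    · intro j _ hj
      have : ¬ (k.val + 1 = j.val + 1) := by
        simp only [ne_eq, Fin.ext_iff] at hj; omega
      simp [this]
      intro hkj
      exact absurd (Fin.ext hkj.symm) hj
    · simp
  set cα := α.map Complex.ofReal with hcα
  set cβ := β.map Complex.ofReal with hcβ
  set cΦ : Fin s → Matrix (Fin n) (Fin n) ℂ := fun k => (Φ k).map Complex.ofReal with hcΦ
  set v1 : Fin n → ℂ := fun a => v (⟨0, Nat.succ_pos s⟩, a) with hv1
  have hgeo : ∀ (k : Fin (s + 1)) (a : Fin n), v (k, a) = (l ^ k.val)⁻¹ * v1 a := by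
    intro k a
    obtain ⟨kv, hk⟩ := k
    induction kv with
    | zero => simp [hv1]
    | succ m ih =>
      have hm : m < s + 1 := by omega
      have h1 : v (⟨m + 1, hk⟩, a) = l⁻¹ * v (⟨m, hm⟩, a) := by
        rw [hrec ⟨m, hm⟩ hk a, inv_mul_cancel_left₀ hl0]
      rw [h1, ih hm, pow_succ, mul_inv]
      ring
  have hv1ne : v1 ≠ 0 := by
    intro h0
    apply hv0
    funext x
    obtain ⟨k, a⟩ := x
    rw [hgeo k a, show v1 a = 0 from congrFun h0 a, mul_zero]
    rfl
  -- key identity from row 0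
  have hkey : ∀ c : Fin n,
      ((cα * cβᵀ).mulVec v1) c
        + ∑ k : Fin s, (l - 1) / l ^ (k.val + 1) * ((cΦ k).mulVec v1) c
      = (l - 1) * v1 c := by
    intro c
    have H := congrFun hv (⟨0, Nat.succ_pos s⟩, c)
    simp only [mulVec, dotProduct, companionMatrix, of_apply, Fintype.sum_prod_type,
      Pi.smul_apply, smul_eq_mul, eq_self_iff_true, if_true] at H
    have H2 : ∑ j : Fin (s + 1), (l ^ j.val)⁻¹ *
        ((varCoefs cα cβ cΦ j).mulVec v1 c) = l * v1 c := by
      rw [← H]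
      refine (Finset.sum_congr rfl fun j _ => ?_).symm
      rw [mulVec, dotProduct, Finset.mul_sum]
      refine Finset.sum_congr rfl fun b _ => ?_
      rw [hgeo j b]
      ring
    set g : ℕ → (Fin n → ℂ) :=
      fun j => if h : j < s then (cΦ ⟨j, h⟩).mulVec v1 else 0 with hg
    have hgm : ∀ m : ℕ, (if h : m < s then cΦ ⟨m, h⟩ else 0).mulVec v1 = g m := by
      intro m
      by_cases h : m < s <;> simp [hg, h]
    have hvc0 : (varCoefs cα cβ cΦ (0 : Fin (s+1))).mulVec v1
        = v1 + (cα * cβᵀ).mulVec v1 + g 0 := by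
      have h0 : varCoefs cα cβ cΦ (0 : Fin (s+1))
          = 1 + cα * cβᵀ + (if h : 0 < s then cΦ ⟨0, h⟩ else 0) := by
        simp [varCoefs]
      rw [h0, add_mulVec, add_mulVec, one_mulVec, hgm]
    have hvcs : ∀ k : Fin s, (varCoefs cα cβ cΦ k.succ).mulVec v1
        = g (k.val + 1) - g k.val := by
      intro k
      rw [varCoefs]
      simp only [Fin.val_succ, Nat.succ_ne_zero, if_false, Nat.add_sub_cancel]
      rw [sub_mulVec, hgm, hgm]
    rw [Fin.sum_univ_succ] at H2
    simp only [Fin.val_zero, pow_zero, inv_one, one_mul, hvc0, hvcs, Fin.val_succ,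
      Pi.add_apply, Pi.sub_apply] at H2
    have hgs : g s c = 0 := by rw [hg]; simp
    have e2 : ∑ k : Fin s, (l ^ (k.val + 1))⁻¹ * g (k.val + 1) c
        = (∑ k : Fin s, (l ^ k.val)⁻¹ * g k.val c) - g 0 c := by
      rw [Fin.sum_univ_eq_sum_range (fun m => (l ^ (m + 1))⁻¹ * g (m + 1) c) s,
        Fin.sum_univ_eq_sum_range (fun m => (l ^ m)⁻¹ * g m c) s]
      have h3 := Finset.sum_range_succ' (fun m => (l ^ m)⁻¹ * g m c) s
      rw [Finset.sum_range_succ (fun m => (l ^ m)⁻¹ * g m c) s, hgs] at h3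
      simp only [pow_zero, inv_one, one_mul, mul_zero, add_zero] at h3
      linear_combination -h3
    have htel : ∑ k : Fin s, (l ^ (k.val + 1))⁻¹ * (g (k.val + 1) c - g k.val c)
        = (∑ k : Fin s, ((l ^ k.val)⁻¹ - (l ^ (k.val + 1))⁻¹) * g k.val c) - g 0 c := by
      simp only [mul_sub, sub_mul, Finset.sum_sub_distrib]
      rw [e2]
      ring
    rw [htel] at H2
    have hc : ∀ m : ℕ, ((l ^ m)⁻¹ - (l ^ (m + 1))⁻¹) = (l - 1) / l ^ (m + 1) := by
      intro m
      have hlp : l ^ (m + 1) ≠ 0 := pow_ne_zero _ hl0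
      rw [pow_succ]
      field_simp
      try ring
    simp only [hc] at H2
    have hgk : ∀ k : Fin s, g k.val c = (cΦ k).mulVec v1 c := by
      intro k
      rw [hg]
      simp only [k.isLt, dif_pos]
    simp only [hgk] at H2
    linear_combination H2
  refine ⟨hrec, hv1ne, ?_⟩
  intro w1 q
  -- w1 is defeq to v1, q to the explicit lambda
  have hβt : βᵀ.map Complex.ofReal = cβᵀ := Matrix.transpose_map
  have hq : ∀ x, q x = (match x with
      | Sum.inl a => cβᵀ.mulVec v1 a
      | Sum.inr (k, a) => (l - 1) / l ^ (k.val + 1) * v1 a : ℂ) := by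
    intro x
    show (match x with
      | Sum.inl a => (βᵀ.map Complex.ofReal).mulVec v1 a
      | Sum.inr (k, a) => (l - 1) / l ^ (k.val + 1) * v1 a : ℂ) = _
    rw [hβt]
  have hl1' : l - 1 ≠ 0 := sub_ne_zero.mpr hl1
  -- pull scalar out of inner sums
  have hpull : ∀ (M : Matrix (Fin n) (Fin n) ℂ) (c : ℂ) (a : Fin n),
      ∑ b, M a b * (c * v1 b) = c * M.mulVec v1 a := by
    intro M c a
    rw [mulVec, dotProduct, Finset.mul_sum]
    exact Finset.sum_congr rfl fun b _ => by ring
  refine ⟨?_, ?_, ?_, ?_, ?_⟩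
  · -- eigen equation for A
    funext i
    rw [mulVec, dotProduct]
    simp only [Fintype.sum_sum_type, Fintype.sum_prod_type, hq, Pi.smul_apply, smul_eq_mul]
    cases i with
    | inl a =>
      simp only [vecmStateMatrix, of_apply]
      -- first term
      have E1 : ∑ b, (cβᵀ * cα + 1 : Matrix (Fin r) (Fin r) ℂ) a b * cβᵀ.mulVec v1 b
          = cβᵀ.mulVec ((cα * cβᵀ).mulVec v1) a + cβᵀ.mulVec v1 a := by
        have : (cβᵀ * cα + 1 : Matrix (Fin r) (Fin r) ℂ).mulVec (cβᵀ.mulVec v1)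
            = cβᵀ.mulVec ((cα * cβᵀ).mulVec v1) + cβᵀ.mulVec v1 := by
          rw [add_mulVec, one_mulVec, mulVec_mulVec, mulVec_mulVec, Matrix.mul_assoc]
        exact congrFun this a
      have swap : ∑ k : Fin s, ∑ b, (cβᵀ * cΦ k : Matrix (Fin r) (Fin n) ℂ) a b *
            ((l - 1) / l ^ (k.val + 1) * v1 b)
          = ∑ c, cβᵀ a c * ∑ k : Fin s, (l - 1) / l ^ (k.val + 1) * (cΦ k).mulVec v1 c := by
        have step1 : ∀ k : Fin s, ∑ b, (cβᵀ * cΦ k : Matrix (Fin r) (Fin n) ℂ) a b *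
              ((l - 1) / l ^ (k.val + 1) * v1 b)
            = ∑ c, cβᵀ a c * ((l - 1) / l ^ (k.val + 1) * (cΦ k).mulVec v1 c) := by
          intro k
          rw [show ∀ x : Fin n → ℂ, (∑ c, cβᵀ a c * ((l - 1) / l ^ (k.val + 1) * x c))
              = _ from fun x => rfl]
          calc ∑ b, (cβᵀ * cΦ k : Matrix (Fin r) (Fin n) ℂ) a b *
                ((l - 1) / l ^ (k.val + 1) * v1 b)
              = ∑ b, ∑ c, cβᵀ a c * cΦ k c b * ((l - 1) / l ^ (k.val + 1) * v1 b) := by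
                refine Finset.sum_congr rfl fun b _ => ?_
                rw [Matrix.mul_apply, Finset.sum_mul]
            _ = ∑ c, ∑ b, cβᵀ a c * cΦ k c b * ((l - 1) / l ^ (k.val + 1) * v1 b) :=
                Finset.sum_comm
            _ = ∑ c, cβᵀ a c * ((l - 1) / l ^ (k.val + 1) * (cΦ k).mulVec v1 c) := by
                refine Finset.sum_congr rfl fun c _ => ?_
                rw [mulVec, dotProduct, Finset.mul_sum, Finset.mul_sum]
                exact Finset.sum_congr rfl fun b _ => by ring
        simp only [step1]
        rw [Finset.sum_comm]
        exact Finset.sum_congr rfl fun c _ => by rw [Finset.mul_sum]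
      rw [E1, swap]
      have E2 : ∑ c, cβᵀ a c * ∑ k : Fin s, (l - 1) / l ^ (k.val + 1) * (cΦ k).mulVec v1 c
          = (l - 1) * cβᵀ.mulVec v1 a - cβᵀ.mulVec ((cα * cβᵀ).mulVec v1) a := by
        have h1 : ∀ c, ∑ k : Fin s, (l - 1) / l ^ (k.val + 1) * (cΦ k).mulVec v1 c
            = (l - 1) * v1 c - (cα * cβᵀ).mulVec v1 c := fun c => by
          linear_combination hkey c
        simp only [h1, mul_sub, Finset.sum_sub_distrib]
        congr 1
        rw [show cβᵀ.mulVec v1 a = ∑ c, cβᵀ a c * v1 c from rfl, Finset.mul_sum]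
        exact Finset.sum_congr rfl fun c _ => by ring
      rw [E2]
      ring
    | inr x =>
      obtain ⟨i, a⟩ := x
      simp only [vecmStateMatrix, of_apply]
      rcases Nat.eq_zero_or_pos i.val with hi | hi
      · simp only [hi, eq_self_iff_true, if_true]
        have E1 : ∑ b, cα a b * cβᵀ.mulVec v1 b = (cα * cβᵀ).mulVec v1 a :=
          congrFun (mulVec_mulVec v1 cα cβᵀ) a
        simp only [hpull]
        rw [E1]
        have hll : l * ((l - 1) / l ^ (0 + 1) * v1 a) = (l - 1) * v1 a := by
          field_simp
          try ring
        rw [hll]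
        linear_combination hkey a
      · have hi0 : ¬ (i.val = 0) := by omega
        simp only [hi0, if_false]
        simp only [zero_mul, Finset.sum_const_zero, zero_add]
        obtain ⟨m, hm⟩ : ∃ m, i.val = m + 1 := ⟨i.val - 1, by omega⟩
        have hms : m < s := by have := i.isLt; omega
        rw [Finset.sum_eq_single (⟨m, hms⟩ : Fin s)]
        · rw [Finset.sum_eq_single a]
          · rw [if_pos (by simp [hm]), if_pos rfl, one_mul, hm]
            have h1 : l ^ (m + 1) ≠ 0 := pow_ne_zero _ hl0
            have h2 : l ^ (m + 1 + 1) ≠ 0 := pow_ne_zero _ hl0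
            field_simp
            ring
          · intro b _ hb
            rw [if_pos (by simp [hm]), if_neg (Ne.symm hb), zero_mul]
          · simp
        · intro k _ hk
          have hne : ¬ (i.val = k.val + 1) := by
            simp only [ne_eq, Fin.ext_iff] at hk
            omega
          simp [hne]
        · simp
  · -- q ≠ 0
    intro h0
    obtain ⟨a, ha⟩ := Function.ne_iff.mp hv1ne
    have h3 : (l - 1) / l ^ ((0 : ℕ) + 1) * v1 a = 0 := congrFun h0 (Sum.inr (⟨0, hs⟩, a))
    have h2 : (l - 1) / l ^ ((0 : ℕ) + 1) ≠ 0 :=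
      div_ne_zero hl1' (pow_ne_zero _ hl0)
    exact ha ((mul_eq_zero.mp h3).resolve_left h2)
  · intro a
    show (l - 1) / l ^ ((0 : ℕ) + 1) * v1 a = (l - 1) / l * v1 a
    rw [pow_one]
  · intro a
    show (βᵀ.map Complex.ofReal).mulVec v1 a = l / (l - 1) *
        (βᵀ.map Complex.ofReal).mulVec (fun b => (l - 1) / l ^ ((0 : ℕ) + 1) * v1 b) a
    rw [mulVec, mulVec, dotProduct, dotProduct, Finset.mul_sum]
    refine Finset.sum_congr rfl fun b _ => ?_
    rw [pow_one]
    field_simp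
  · intro a
    show (βᵀ.map Complex.ofReal).mulVec v1 a = (βᵀ.map Complex.ofReal).mulVec v1 a
    rfl
end

section
/- Let A ∈ ℝ^{m×m} (m = r + n(p−1)) be the VECM state matrix built from α, β ∈ ℝ^{n×r} and Φ_1, …, Φ_{p−1} ∈ ℝ^{n×n}, and suppose α has full column rank r. Let λ ∈ ℂ with λ ≠ 0 and let q = (q_β', q_1', …, q_{p−1}')' ∈ ℂ^m be a nonzero vector with Aq = λq. Then q_1 ≠ 0. -/
open Matrix

/-- Full column rank implies the complexified matrix has injective `mulVec`. -/
lemma complexified_injective {n r : ℕ} (α : Matrix (Fin n) (Fin r) ℝ)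
    (hα : α.rank = r) :
    Function.Injective (α.map Complex.ofReal).mulVec := by
  set G : Matrix (Fin r) (Fin r) ℝ := αᵀ * α with hG
  have hGrank : G.rank = r := by rw [hG, Matrix.rank_transpose_mul_self, hα]
  have hGunit : IsUnit G := by
    rw [← Matrix.mulVec_injective_iff_isUnit]
    have hsurj : Function.Surjective G.mulVecLin := by
      rw [← LinearMap.range_eq_top]
      apply Submodule.eq_top_of_finrank_eq
      simpa [Matrix.rank] using hGrank
    have : Function.Injective G.mulVecLin :=
      (LinearMap.injective_iff_surjective).2 hsurj
    simpa [Matrix.coe_mulVecLin] using this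
  have hdet : G.det ≠ 0 := ((Matrix.isUnit_iff_isUnit_det G).1 hGunit).ne_zero
  have hdetC : (G.map (Complex.ofRealHom : ℝ →+* ℂ)).det ≠ 0 := by
    rw [← RingHom.mapMatrix_apply, ← RingHom.map_det]
    simpa using hdet
  have hGCunit : IsUnit (G.map (Complex.ofRealHom : ℝ →+* ℂ)) :=
    (Matrix.isUnit_iff_isUnit_det _).2 (Ne.isUnit hdetC)
  have hGCinj := Matrix.mulVec_injective_iff_isUnit.2 hGCunit
  intro u v huv
  have key : (G.map (Complex.ofRealHom : ℝ →+* ℂ)).mulVec u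
      = (G.map (Complex.ofRealHom : ℝ →+* ℂ)).mulVec v := by
    have hGC : G.map (Complex.ofRealHom : ℝ →+* ℂ) =
        (α.map (Complex.ofRealHom : ℝ →+* ℂ))ᵀ * α.map (Complex.ofRealHom : ℝ →+* ℂ) := by
      rw [hG, Matrix.map_mul, Matrix.transpose_map]
    have huv' : α.map (Complex.ofRealHom : ℝ →+* ℂ) *ᵥ u
        = α.map (Complex.ofRealHom : ℝ →+* ℂ) *ᵥ v := huv
    rw [hGC, ← Matrix.mulVec_mulVec, ← Matrix.mulVec_mulVec, huv']
  exact hGCinj key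

/-- If α has full column rank r and Aq = λq with λ ≠ 0 and q ≠ 0 (A the VECM
state matrix), then the block q₁ of q is nonzero. -/
theorem stmt6 (n r s : ℕ) (hs : 0 < s)
    (α β : Matrix (Fin n) (Fin r) ℝ) (Φ : Fin s → Matrix (Fin n) (Fin n) ℝ)
    (hα : α.rank = r)
    (l : ℂ) (hl : l ≠ 0)
    (q : Fin r ⊕ Fin s × Fin n → ℂ) (hq0 : q ≠ 0)
    (hq : (vecmStateMatrix (α.map Complex.ofReal) (β.map Complex.ofReal)
        (fun k => (Φ k).map Complex.ofReal)).mulVec q = l • q) :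
    (fun a => q (Sum.inr (⟨0, hs⟩, a))) ≠ 0 := by
  intro h0
  -- All lag blocks vanish
  have hQ : ∀ m : ℕ, ∀ hm : m < s, ∀ a, q (Sum.inr (⟨m, hm⟩, a)) = 0 := by
    intro m
    induction m with
    | zero =>
      intro hm a
      exact congrFun h0 a
    | succ j ih =>
      intro hm a
      have hj : j < s := Nat.lt_of_succ_lt hm
      have heq := congrFun hq (Sum.inr (⟨j + 1, hm⟩, a))
      have hrow : (vecmStateMatrix (α.map Complex.ofReal) (β.map Complex.ofReal)
          (fun k => (Φ k).map Complex.ofReal)).mulVec q (Sum.inr (⟨j + 1, hm⟩, a))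
          = q (Sum.inr (⟨j, hj⟩, a)) := by
        have hk : ∀ k : Fin s, (j + 1 = k.val + 1) = (k = ⟨j, hj⟩) := by
          intro k
          simp [Fin.ext_iff, eq_comm]
        simp only [Matrix.mulVec, dotProduct, vecmStateMatrix, Matrix.of_apply,
          Fintype.sum_sum_type, Fintype.sum_prod_type, Nat.succ_ne_zero, if_false, hk,
          zero_mul, Finset.sum_const_zero, zero_add, ite_mul, one_mul]
        rw [Finset.sum_eq_single (⟨j, hj⟩ : Fin s)]
        · simp
        · intro k _ hkne; simp [hkne]
        · simp
      rw [hrow, ih hj a] at heq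
      have hz : l * q (Sum.inr (⟨j + 1, hm⟩, a)) = 0 := by
        simpa [Pi.smul_apply] using heq.symm
      rcases mul_eq_zero.1 hz with h | h
      · exact absurd h hl
      · exact h
  -- The β-block also vanishes
  have hβ0 : ∀ b : Fin r, q (Sum.inl b) = 0 := by
    have hmv : (α.map Complex.ofReal).mulVec (fun b => q (Sum.inl b)) = 0 := by
      funext a
      have heq := congrFun hq (Sum.inr (⟨0, hs⟩, a))
      have hrow : (vecmStateMatrix (α.map Complex.ofReal) (β.map Complex.ofReal)
          (fun k => (Φ k).map Complex.ofReal)).mulVec q (Sum.inr (⟨0, hs⟩, a))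
          = (α.map Complex.ofReal).mulVec (fun b => q (Sum.inl b)) a := by
        simp only [Matrix.mulVec, dotProduct, vecmStateMatrix, Matrix.of_apply,
          Fintype.sum_sum_type, Fintype.sum_prod_type, if_true]
        have : ∀ k : Fin s, ∀ b : Fin n, q (Sum.inr (k, b)) = 0 := by
          intro k b
          have := hQ k.val k.isLt b
          simpa using this
        simp [this]
      rw [hrow] at heq
      have : l * q (Sum.inr (⟨0, hs⟩, a)) = (α.map Complex.ofReal).mulVec
          (fun b => q (Sum.inl b)) a := by
        simpa [Pi.smul_apply] using heq.symm
      rw [hQ 0 hs a, mul_zero] at this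
      exact this.symm
    have hinj := complexified_injective α hα
    have : (fun b => q (Sum.inl b)) = 0 := by
      apply hinj
      rw [hmv, Matrix.mulVec_zero]
    exact fun b => congrFun this b
  apply hq0
  funext x
  rcases x with b | ⟨k, a⟩
  · exact hβ0 b
  · have := hQ k.val k.isLt a
    simpa using this
end

section
/- Let n > r ≥ 1, let α ∈ ℝ^{n×r} have full column rank r and set ᾱ = α(α'α)^{−1} (so ᾱ'α = I_r). Let C ∈ ℝ^{n×n} satisfy Cα = 0, let S_C ∈ ℝ^{(n−r)×n} be such that S_C C has full row rank n−r, and let F ∈ ℝ^{n×n} be arbitrary. Then the stacked n×n matrix whose first r rows are ᾱ'(F C − I_n) and whose last n−r rows are S_C C has rank n (it is invertible). -/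
open Matrix

lemma aux_ker_eq_bot_of_rank {m n : ℕ} (A : Matrix (Fin m) (Fin n) ℝ) (h : A.rank = n) :
    LinearMap.ker A.mulVecLin = ⊥ := by
  have := LinearMap.finrank_range_add_finrank_ker A.mulVecLin
  rw [Module.finrank_pi] at this
  simp only [Fintype.card_fin] at this
  rw [Matrix.rank] at h
  have hker : Module.finrank ℝ (LinearMap.ker A.mulVecLin) = 0 := by omega
  exact Submodule.finrank_eq_zero.mp hker

/-- Let α ∈ ℝ^{n×r} have full column rank r, ᾱ = α(α'α)⁻¹, C ∈ ℝ^{n×n} with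
Cα = 0, S_C with rank(S_C C) = n - r, and F arbitrary.  Then the stacked n×n
matrix with first r rows ᾱ'(FC - I) and last n-r rows S_C C has rank n. -/
theorem stmt13 (n r : ℕ) (hr : 1 ≤ r) (hrn : r < n)
    (α : Matrix (Fin n) (Fin r) ℝ) (hα : α.rank = r)
    (C F : Matrix (Fin n) (Fin n) ℝ) (hC : C * α = 0)
    (SC : Matrix (Fin (n - r)) (Fin n) ℝ) (hSC : (SC * C).rank = n - r) :
    let αbar : Matrix (Fin n) (Fin r) ℝ := α * (αᵀ * α)⁻¹
    let M : Matrix (Fin r ⊕ Fin (n - r)) (Fin n) ℝ :=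
      Matrix.of fun i j =>
        match i with
        | Sum.inl a => (αbarᵀ * (F * C - 1) : Matrix (Fin r) (Fin n) ℝ) a j
        | Sum.inr a => (SC * C : Matrix (Fin (n - r)) (Fin n) ℝ) a j
    M.rank = n := by
  intro αbar M
  -- α has trivial kernel
  have hkerα : LinearMap.ker α.mulVecLin = ⊥ := aux_ker_eq_bot_of_rank α hα
  -- αᵀα is a unit
  have hunit : IsUnit (αᵀ * α) := by
    rw [← Matrix.mulVec_injective_iff_isUnit]
    have hk : LinearMap.ker (αᵀ * α).mulVecLin = ⊥ := by
      rw [Matrix.ker_mulVecLin_transpose_mul_self]; exact hkerα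
    exact LinearMap.ker_eq_bot.mp hk
  have hdet : IsUnit (αᵀ * α).det := (Matrix.isUnit_iff_isUnit_det _).mp hunit
  -- ᾱᵀ α = 1
  have hbar : αbarᵀ * α = 1 := by
    have hsymm : (αᵀ * α)ᵀ = αᵀ * α := by
      rw [Matrix.transpose_mul, Matrix.transpose_transpose]
    calc αbarᵀ * α = ((αᵀ * α)⁻¹)ᵀ * (αᵀ * α) := by
          simp [αbar, Matrix.transpose_mul, Matrix.mul_assoc]
      _ = ((αᵀ * α)ᵀ)⁻¹ * (αᵀ * α) := by rw [Matrix.transpose_nonsing_inv]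
      _ = (αᵀ * α)⁻¹ * (αᵀ * α) := by rw [hsymm]
      _ = 1 := Matrix.nonsing_inv_mul _ hdet
  -- kernel of SC*C equals range of α
  have hBα : (SC * C) * α = 0 := by rw [Matrix.mul_assoc, hC, Matrix.mul_zero]
  have hle : LinearMap.range α.mulVecLin ≤ LinearMap.ker (SC * C).mulVecLin := by
    rintro x ⟨v, rfl⟩
    simp only [LinearMap.mem_ker, Matrix.mulVecLin_apply, Matrix.mulVec_mulVec, hBα,
      Matrix.zero_mulVec]
  have hrange : Module.finrank ℝ (LinearMap.range α.mulVecLin) = r := by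
    rw [← Matrix.rank, hα]
  have hkerB : Module.finrank ℝ (LinearMap.ker (SC * C).mulVecLin) = r := by
    have := LinearMap.finrank_range_add_finrank_ker (SC * C).mulVecLin
    rw [Module.finrank_pi] at this
    simp only [Fintype.card_fin] at this
    rw [← Matrix.rank, hSC] at this
    omega
  have hkereq : LinearMap.ker (SC * C).mulVecLin = LinearMap.range α.mulVecLin :=
    (Submodule.eq_of_le_of_finrank_eq hle (by rw [hrange, hkerB])).symm
  -- M equals fromRows
  have hM : M = Matrix.fromRows (αbarᵀ * (F * C - 1)) (SC * C) := by
    ext (i | i) j <;> rfl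
  -- ker M = ⊥
  have hkerM : LinearMap.ker M.mulVecLin = ⊥ := by
    rw [LinearMap.ker_eq_bot']
    intro x hx
    rw [Matrix.mulVecLin_apply, hM, Matrix.fromRows_mulVec] at hx
    have hB : (SC * C) *ᵥ x = 0 := by
      ext i; exact congrFun hx (Sum.inr i)
    have hA : (αbarᵀ * (F * C - 1)) *ᵥ x = 0 := by
      ext i; exact congrFun hx (Sum.inl i)
    have hxmem : x ∈ LinearMap.range α.mulVecLin := by
      rw [← hkereq]; exact hB
    obtain ⟨v, rfl⟩ := hxmem
    have hCx : C *ᵥ (α.mulVecLin v) = 0 := by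
      simp [Matrix.mulVecLin_apply, Matrix.mulVec_mulVec, hC]
    have hv : v = 0 := by
      have hCx' : C *ᵥ (α *ᵥ v) = 0 := by
        simpa [Matrix.mulVecLin_apply] using hCx
      have h1 : (αbarᵀ * (F * C - 1)) *ᵥ (α.mulVecLin v) = -v := by
        rw [Matrix.mulVecLin_apply, ← Matrix.mulVec_mulVec, Matrix.sub_mulVec,
          Matrix.one_mulVec, Matrix.mulVec_sub, ← Matrix.mulVec_mulVec, hCx']
        simp [Matrix.mulVec_mulVec, hbar]
      rw [hA] at h1
      simpa using h1.symm
    simp [hv]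
  -- conclude
  have := LinearMap.finrank_range_add_finrank_ker M.mulVecLin
  rw [Module.finrank_pi, hkerM] at this
  simp only [Fintype.card_fin, finrank_bot, add_zero] at this
  rw [Matrix.rank, this]
end
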